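/- Let M be a comultiplication R-module and N a nonzero submodule such that Ann_R(N) is a 2-absorbing ideal of R. Then N is a strongly 2-absorbing second submodule of M. -/

import Mathlib

open Pointwise

/-- A proper ideal `I` is 2-absorbing if `a*b*c ∈ I` implies `a*b ∈ I` or `a*c ∈ I`
or `b*c ∈ I`. -/
def Is2AbsorbingIdeal {R : Type*} [CommRing R] (I : Ideal R) : Prop :=
  I ≠ ⊤ ∧ ∀ a b c : R, a * b * c ∈ I → a * b ∈ I ∨ a * c ∈ I ∨ b * c ∈ I

/-- An `R`-module `M` is a comultiplication module if every submodule `N` satisfies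
`N = (0 :_M Ann_R(N))`. -/
def IsComultiplicationModule (R M : Type*) [CommRing R] [AddCommGroup M] [Module R M] : Prop :=
  ∀ (N : Submodule R M) (m : M), m ∈ N ↔ ∀ r ∈ N.annihilator, r • m = 0

/-- A nonzero submodule `N` is strongly 2-absorbing second: whenever `a b : R` and
`K` is a submodule with `a • b • N ⊆ K`, then `a • N ⊆ K` or `b • N ⊆ K` or
`a • b • N = 0`. -/
def IsStrongly2AbsorbingSecond {R M : Type*} [CommRing R] [AddCommGroup M] [Module R M]
    (N : Submodule R M) : Prop :=
  N ≠ ⊥ ∧ ∀ (a b : R) (K : Submodule R M), a • b • N ≤ K →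
    a • N ≤ K ∨ b • N ≤ K ∨ a • b • N = ⊥

/-!
In a comultiplication module, `r • N ≤ K` holds exactly when `Ann(K) ⊆ (Ann(N) : r)`. If
`ab ∉ Ann(N)`, the 2-absorbing property puts `(Ann(N) : ab)` inside `(Ann(N) : a) ∪ (Ann(N) : b)`,
and an ideal covered by two ideals lies in one of them.
-/

namespace Submodule

variable {R M : Type*} [CommRing R] [AddCommGroup M] [Module R M]

theorem pointwise_smul_eq_bot_iff_mem_annihilator {N : Submodule R M} {r : R} :
    r • N = ⊥ ↔ r ∈ N.annihilator := by
  refine ⟨fun h => mem_annihilator.2 fun n hn => ?_, fun h => eq_bot_iff.2 ?_⟩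
  · exact (mem_bot R).1 (h ▸ smul_mem_pointwise_smul n r N hn)
  · rintro _ ⟨n, hn, rfl⟩
    exact (mem_bot R).2 (mem_annihilator.1 h n hn)

theorem annihilator_le_colon_of_pointwise_smul_le {N K : Submodule R M} {r : R}
    (h : r • N ≤ K) : K.annihilator ≤ N.annihilator.colon {r} := by
  intro s hs
  rw [mem_colon_singleton, smul_eq_mul, mem_annihilator]
  intro n hn
  rw [mul_smul]
  exact mem_annihilator.1 hs _ (h (smul_mem_pointwise_smul n r N hn))

theorem pointwise_smul_le_of_annihilator_le_colon (hM : IsComultiplicationModule R M)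
    {N K : Submodule R M} {r : R} (h : K.annihilator ≤ N.annihilator.colon {r}) :
    r • N ≤ K := by
  rintro _ ⟨n, hn, rfl⟩
  refine (hM K _).2 fun s hs => ?_
  have hsr := mem_colon_singleton.1 (h hs)
  rw [smul_eq_mul, mem_annihilator] at hsr
  simpa only [DistribSMul.toLinearMap_apply, mul_smul] using hsr n hn

theorem pointwise_smul_le_iff_annihilator_le_colon (hM : IsComultiplicationModule R M)
    {N K : Submodule R M} {r : R} : r • N ≤ K ↔ K.annihilator ≤ N.annihilator.colon {r} :=
  ⟨annihilator_le_colon_of_pointwise_smul_le, pointwise_smul_le_of_annihilator_le_colon hM⟩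

end Submodule

theorem Is2AbsorbingIdeal.colon_mul_subset_union {R : Type*} [CommRing R] {I : Ideal R}
    (hI : Is2AbsorbingIdeal I) {a b : R} (hab : a * b ∉ I) :
    (I.colon {a * b} : Set R) ⊆ I.colon {a} ∪ I.colon {b} := by
  intro s hs
  simp only [Set.mem_union, SetLike.mem_coe, Submodule.mem_colon_singleton, smul_eq_mul] at hs ⊢
  rw [← mul_assoc] at hs
  exact (hI.2 s a b hs).imp_right (Or.resolve_right · hab)

theorem strongly2AbsorbingSecond_of_ann_2absorbing
    {R M : Type*} [CommRing R] [AddCommGroup M] [Module R M]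
    (hM : IsComultiplicationModule R M) (N : Submodule R M) (hne : N ≠ ⊥)
    (h : Is2AbsorbingIdeal N.annihilator) :
    IsStrongly2AbsorbingSecond N := by
  refine ⟨hne, fun a b K hK => ?_⟩
  rw [smul_smul] at hK ⊢
  by_cases hab : a * b ∈ N.annihilator
  · exact Or.inr (Or.inr (Submodule.pointwise_smul_eq_bot_iff_mem_annihilator.2 hab))
  simp only [Submodule.pointwise_smul_le_iff_annihilator_le_colon hM] at hK ⊢
  have hcover : (K.annihilator : Set R) ⊆ N.annihilator.colon {a} ∪ N.annihilator.colon {b} :=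
    fun _ hs => h.colon_mul_subset_union hab (hK hs)
  exact (Ideal.subset_union.1 hcover).imp_right Or.inl
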